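/- arXiv:math/0403316 — 2 statements merged into one kernel-verified Lean document; each statement's English description precedes it below -/
import Mathlib

section
/- The formal power series h(t) = ∑_{n≥0} (−1)^{n+1} c_n t^{3n+1}, where c_n is the n-th Catalan number, is its own inverse under composition: h(h(t)) = t. -/
/-!
With `c(t) = ∑ cₙ tⁿ` one has `h(t) = -t c(-t³)`, so `c = 1 + t c²` becomes `h = -t + t² h²`.
Substituting `h` for `t`, both `h ∘ h` and `t` solve `u = -h + h² u²`, and this equation has at
most one solution because `1 - h² (u + v)` has constant coefficient `1`.
-/

open PowerSeries

/-- Composition `f(g)` of formal power series (intended for `g` with zero constant term). -/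
noncomputable def pcomp (f g : PowerSeries ℚ) : PowerSeries ℚ :=
  PowerSeries.mk fun n =>
    ∑ k ∈ Finset.range (n + 1), (PowerSeries.coeff k f) * (PowerSeries.coeff n (g ^ k))

/-- `h(t) = ∑_{n≥0} (−1)^{n+1} c_n t^{3n+1}` where `c_n` is the `n`-th Catalan number:
the coefficient of `t^m` is `(−1)^{n+1} c_n` if `m = 3n+1` and `0` otherwise. -/
noncomputable def hCat : PowerSeries ℚ :=
  PowerSeries.mk fun m =>
    if m % 3 = 1 then (-1 : ℚ) ^ (m / 3 + 1) * (catalan (m / 3) : ℚ) else 0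

namespace PowerSeries

variable {R : Type*} [CommRing R]

theorem coeff_pow_eq_zero_of_constantCoeff_eq_zero {g : R⟦X⟧} (hg : constantCoeff g = 0)
    {n k : ℕ} (h : n < k) : coeff n (g ^ k) = 0 :=
  coeff_of_lt_order _ ((Nat.cast_lt.2 h).trans_le (le_order_pow_of_constantCoeff_eq_zero k hg))

theorem eq_of_eq_add_mul_sq {a b u v : R⟦X⟧} (ha : constantCoeff a = 0)
    (hu : u = b + a * u ^ 2) (hv : v = b + a * v ^ 2) : u = v := by
  have hunit : IsUnit (1 - a * (u + v)) := isUnit_iff_constantCoeff.2 (by simp [ha])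
  have hfac : (u - v) * (1 - a * (u + v)) = 0 := by linear_combination hu - hv
  exact sub_eq_zero.1 (hunit.mul_left_eq_zero.1 hfac)

end PowerSeries

theorem pcomp_eq_subst (f : ℚ⟦X⟧) {g : ℚ⟦X⟧} (hg : constantCoeff g = 0) :
    pcomp f g = f.subst g := by
  ext n
  rw [coeff_subst' (HasSubst.of_constantCoeff_zero' hg),
    finsum_eq_sum_of_support_subset (s := Finset.range (n + 1))]
  · simp [pcomp]
  · intro d hd
    rw [Function.mem_support] at hd
    rw [Finset.coe_range, Set.mem_Iio]
    by_contra! hnd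
    exact hd (by rw [coeff_pow_eq_zero_of_constantCoeff_eq_zero hg (by omega), smul_zero])

/-- `c(-t) = ∑ (-1)ⁿ cₙ tⁿ`. -/
noncomputable def altCatalanSeries : ℚ⟦X⟧ :=
  rescale (-1) (map (Nat.castRingHom ℚ) catalanSeries)

theorem altCatalanSeries_eq : altCatalanSeries = 1 - X * altCatalanSeries ^ 2 := by
  have h := congrArg (fun f => rescale (-1 : ℚ) (map (Nat.castRingHom ℚ) f))
    catalanSeries_sq_mul_X_add_one
  simp only [map_add, map_mul, map_pow, map_X, map_one, map_neg, rescale_X] at h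
  rw [altCatalanSeries]
  linear_combination h.symm

theorem hCat_eq_neg_X_mul_expand : hCat = -X * expand 3 three_ne_zero altCatalanSeries := by
  ext m
  rcases m with _ | k
  · simp [hCat]
  rw [neg_mul, map_neg, coeff_succ_X_mul, coeff_expand, altCatalanSeries, coeff_rescale, coeff_map,
    catalanSeries_coeff, hCat, coeff_mk]
  by_cases hk : 3 ∣ k
  · rw [if_pos (by omega), if_pos hk, (by omega : (k + 1) / 3 = k / 3)]
    simp [pow_succ]
  · rw [if_neg (by omega), if_neg hk, neg_zero]

theorem constantCoeff_hCat : constantCoeff hCat = 0 := by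
  simp [hCat_eq_neg_X_mul_expand]

theorem hCat_eq_neg_X_add_X_sq_mul_sq : hCat = -X + X ^ 2 * hCat ^ 2 := by
  have hE := congrArg (expand 3 three_ne_zero) altCatalanSeries_eq
  simp only [map_sub, map_one, map_mul, map_pow, expand_X] at hE
  rw [hCat_eq_neg_X_mul_expand]
  linear_combination (-X) * hE

/-- `h` is its own compositional inverse: `h(h(t)) = t`. -/
theorem hCat_comp_self : pcomp hCat hCat = X := by
  have hh := constantCoeff_hCat
  rw [pcomp_eq_subst _ hh]
  refine eq_of_eq_add_mul_sq (a := hCat ^ 2) (b := -hCat) (by simp [hh]) ?_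
    (by linear_combination hCat_eq_neg_X_add_X_sq_mul_sq)
  calc hCat.subst hCat = (-X + X ^ 2 * hCat ^ 2).subst hCat := by
        rw [← hCat_eq_neg_X_add_X_sq_mul_sq]
    _ = -hCat + hCat ^ 2 * (hCat.subst hCat) ^ 2 := by
        rw [← coe_substAlgHom (HasSubst.of_constantCoeff_zero' hh)]
        simp [substAlgHom_X]
end

section
/- Let I be a finite set and X ⊆ Y₂ × I² with complement Z. Suppose g(t) := ∑_{n≥0} (−1)^{n+1} (#Z_n) t^{n+1} and f(t) := ∑_{n≥0} (−1)^{n+1} (#X_n) t^{n+1}. If for each weight w ≥ 1 one forms the finite chain complex K_*^{(w)} with K_{n+1}^{(w)} = ⊕ K[Z_n × X_{i_0} × ⋯ × X_{i_n}] over tuples with n + i_0 + ⋯ + i_n = w, then the Euler characteristic of K_*^{(w)} equals the coefficient of (−1)^w t^{w+1} in g(f(t)). Consequently, if every K_*^{(w)} for w ≥ 1 is acyclic and K_*^{(0)} has Euler characteristic 1, then g(f(t)) = t. -/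
/-- Planar binary rooted trees with internal vertices labelled by `I`. -/
inductive PBTree (I : Type) : Type
  | leaf : PBTree I
  | node : PBTree I → I → PBTree I → PBTree I

/-- The two planar binary trees with 2 vertices: `L` (left comb) and `R` (right comb). -/
inductive Side : Type
  | L : Side
  | R : Side

namespace PBTree

variable {I : Type}

/-- The number of internal vertices of a tree. -/
def vertices : PBTree I → ℕ
  | leaf => 0
  | node l _ r => l.vertices + r.vertices + 1

/-- The set of local patterns of a labelled tree: each pair of adjacent internal vertices,
with labels `i` (lower vertex) and `j` (upper vertex), contributes `(L, i, j)` if the upper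
vertex is the left child and `(R, i, j)` if it is the right child. -/
def patterns : PBTree I → Set (Side × I × I)
  | leaf => ∅
  | node l i r =>
      l.patterns ∪ r.patterns ∪
      (match l with
        | leaf => ∅
        | node _ j _ => {(Side.L, i, j)}) ∪
      (match r with
        | leaf => ∅
        | node _ j _ => {(Side.R, i, j)})

/-- `treeSet X n` is the set `X_n` of labelled trees with `n` vertices all of whose
local patterns lie in `X`. -/
def treeSet (X : Set (Side × I × I)) (n : ℕ) : Set (PBTree I) :=
  {t : PBTree I | t.vertices = n ∧ t.patterns ⊆ X}

end PBTree

open PBTree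

/- The Euler characteristic `χ(w)` is a signed count of the tuples `(n, i_0, …, i_n)` of weight
`w`, which is exactly how the coefficient of `t^{w+1}` in `g(f(t)) = ∑ₙ gₙ₊₁ f(t)^{n+1}` expands.
Both `f` and `g` are `t ↦ -t · A(-t)` for the ordinary generating function `A` of their
coefficients, i.e. `rescale (-1) (X * A)`, and `rescale` commutes with powers, so all signs
collect into a single factor `(-1)^{w+1}`. -/

namespace PowerSeries

open Finset

section CommSemiring

variable {R : Type*} [CommSemiring R]

theorem coeff_pow_eq_sum_antidiagonalTuple (k n : ℕ) (φ : R⟦X⟧) :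
    coeff n (φ ^ k) = ∑ l ∈ Nat.antidiagonalTuple k n, ∏ i, coeff (l i) φ := by
  classical
  rw [← Fin.prod_const, coeff_prod, finsuppAntidiag, sum_map,
    ← piAntidiag_univ_fin_eq_antidiagonalTuple]
  exact sum_attach (piAntidiag univ n) fun l => ∏ i, coeff (l i) φ

theorem coeff_mk_pow (c : ℕ → R) (k n : ℕ) :
    coeff n (mk c ^ k) = ∑ l ∈ Nat.antidiagonalTuple k n, ∏ i, c (l i) := by
  simp only [coeff_pow_eq_sum_antidiagonalTuple, coeff_mk]

theorem coeff_rescale_X_mul_pow (r : R) (φ : R⟦X⟧) (k n : ℕ) :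
    coeff n (rescale r (X * φ) ^ k) = r ^ n * if k ≤ n then coeff (n - k) (φ ^ k) else 0 := by
  rw [← map_pow, coeff_rescale, mul_pow, coeff_X_pow_mul']

end CommSemiring

theorem mk_signed_shift_eq_rescale {R : Type*} [CommRing R] (c : ℕ → R) :
    mk (fun m => if m = 0 then 0 else (-1 : R) ^ m * c (m - 1)) = rescale (-1) (X * mk c) := by
  ext (_ | m) <;> simp [coeff_rescale, coeff_succ_X_mul, pow_succ]

end PowerSeries

open PowerSeries

theorem coeff_zero_pcomp (g f : PowerSeries ℚ) : coeff 0 (pcomp g f) = coeff 0 g := by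
  simp [pcomp]

theorem coeff_succ_pcomp {g : PowerSeries ℚ} (hg : coeff 0 g = 0) (f : PowerSeries ℚ) (w : ℕ) :
    coeff (w + 1) (pcomp g f) =
      ∑ n ∈ Finset.range (w + 1), coeff (n + 1) g * coeff (w + 1) (f ^ (n + 1)) := by
  rw [pcomp, coeff_mk, Finset.sum_range_succ', hg, zero_mul, add_zero]

theorem euler_characteristic_koszul_general
    (a b : ℕ → ℚ)
    (f g : PowerSeries ℚ)
    (hf : f = PowerSeries.mk fun m => if m = 0 then 0 else (-1 : ℚ) ^ m * a (m - 1))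
    (hg : g = PowerSeries.mk fun m => if m = 0 then 0 else (-1 : ℚ) ^ m * b (m - 1))
    (χ : ℕ → ℚ)
    (hχ : ∀ w, χ w = ∑ n ∈ Finset.range (w + 1), (-1 : ℚ) ^ n * b n *
      ∑ i ∈ Finset.Nat.antidiagonalTuple (n + 1) (w - n), ∏ j, a (i j)) :
    (∀ w : ℕ, PowerSeries.coeff (w + 1) (pcomp g f) = (-1 : ℚ) ^ w * χ w) ∧
    ((∀ w : ℕ, 1 ≤ w → χ w = 0) → χ 0 = 1 → pcomp g f = PowerSeries.X) := by
  rw [mk_signed_shift_eq_rescale] at hf hg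
  have hg₀ : coeff 0 g = 0 := by simp [hg]
  have hcoeff (w : ℕ) : coeff (w + 1) (pcomp g f) = (-1) ^ w * χ w := by
    rw [coeff_succ_pcomp hg₀, hχ, Finset.mul_sum]
    refine Finset.sum_congr rfl fun n hn => ?_
    have hnw : n + 1 ≤ w + 1 := by simpa [Nat.lt_succ_iff] using hn
    rw [hf, hg, coeff_rescale_X_mul_pow, if_pos hnw, Nat.add_sub_add_right, coeff_mk_pow,
      coeff_rescale, coeff_succ_X_mul, coeff_mk]
    ring
  refine ⟨hcoeff, fun hχ_pos hχ_zero => ?_⟩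
  ext (_ | _ | w)
  · simp [coeff_zero_pcomp, hg₀]
  · simp [hcoeff, hχ_zero]
  · simp [hcoeff, hχ_pos, coeff_X]

/-- Let `X ⊆ Y₂ × I²` with complement `Z`, let `a_n = #X_n`, `b_n = #Z_n`, and let
`f(t) = ∑ (−1)^{n+1} a_n t^{n+1}`, `g(t) = ∑ (−1)^{n+1} b_n t^{n+1}`.  For each weight `w`,
the chain complex `K_*^{(w)}` has `K_{n+1}^{(w)} = ⊕ K[Z_n × X_{i_0} × ⋯ × X_{i_n}]`, the sum
over `(i_0,…,i_n)` with `n + i_0 + ⋯ + i_n = w`, so `dim K_{n+1}^{(w)} = b_n · ∑ ∏_j a_{i_j}`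
and its Euler characteristic is `χ(w) = ∑_{n=0}^{w} (−1)^n b_n ∑_{i_0+⋯+i_n=w−n} ∏_j a_{i_j}`.
Then the coefficient of `t^{w+1}` in `g(f(t))` is `(−1)^w χ(w)`; consequently, if `χ(w) = 0`
for all `w ≥ 1` (as holds when each `K_*^{(w)}` is acyclic) and `χ(0) = 1`, then
`g(f(t)) = t`. -/
theorem euler_characteristic_koszul {I : Type} [Fintype I]
    (X Z : Set (Side × I × I)) (hZ : Z = Xᶜ)
    (a b : ℕ → ℚ)
    (ha : ∀ n, a n = ((PBTree.treeSet X n).ncard : ℚ))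
    (hb : ∀ n, b n = ((PBTree.treeSet Z n).ncard : ℚ))
    (f g : PowerSeries ℚ)
    (hf : f = PowerSeries.mk fun m => if m = 0 then 0 else (-1 : ℚ) ^ m * a (m - 1))
    (hg : g = PowerSeries.mk fun m => if m = 0 then 0 else (-1 : ℚ) ^ m * b (m - 1))
    (χ : ℕ → ℚ)
    (hχ : ∀ w, χ w = ∑ n ∈ Finset.range (w + 1), (-1 : ℚ) ^ n * b n *
      ∑ i ∈ Finset.Nat.antidiagonalTuple (n + 1) (w - n), ∏ j, a (i j)) :
    (∀ w : ℕ, PowerSeries.coeff (w + 1) (pcomp g f) = (-1 : ℚ) ^ w * χ w) ∧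
    ((∀ w : ℕ, 1 ≤ w → χ w = 0) → χ 0 = 1 → pcomp g f = PowerSeries.X) :=
  euler_characteristic_koszul_general a b f g hf hg χ hχ
end
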